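/- For n ≥ 3 and x, x' ∈ PE_n, the join x ∨ x' computed in the noncrossing partition lattice NC_n never has {n-1, n} as a block. -/

import Mathlib

/-- A set partition of `[n]` (as a setoid on `Fin n`) is noncrossing. -/
def IsNoncrossing {n : ℕ} (x : Setoid (Fin n)) : Prop :=
  ∀ i j k l : Fin n, i < j → j < k → k < l → x.r i k → x.r j l → x.r i j

/-- `B` is a block of the set partition `x`. -/
def IsBlock {n : ℕ} (x : Setoid (Fin n)) (B : Set (Fin n)) : Prop :=
  ∃ a, B = {b | x.r a b}

/-- The set partition whose unique (possibly) non-singleton block is `S`. -/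
def blockSetoid {n : ℕ} (S : Set (Fin n)) : Setoid (Fin n) where
  r a b := a = b ∨ (a ∈ S ∧ b ∈ S)
  iseqv := by
    refine ⟨fun _ => Or.inl rfl, ?_, ?_⟩
    · rintro a b (rfl | ⟨h1, h2⟩)
      · exact Or.inl rfl
      · exact Or.inr ⟨h2, h1⟩
    · rintro a b c (rfl | ⟨h1, h2⟩) h
      · exact h
      · rcases h with rfl | ⟨h3, h4⟩
        · exact Or.inr ⟨h1, h2⟩
        · exact Or.inr ⟨h1, h4⟩

/-- The element `x_i` of the left-modular chain: its unique non-singleton block is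
`[i-1] ∪ {n}` (in 1-based terms), i.e. the elements with value `< i-1` or value `n-1`. -/
def xChain (n i : ℕ) : Setoid (Fin n) :=
  blockSetoid {a : Fin n | a.val + 1 < i ∨ a.val = n - 1}

/-- The noncrossing closure: the smallest noncrossing partition above `x`. -/
def ncClosure {n : ℕ} (x : Setoid (Fin n)) : Setoid (Fin n) :=
  sInf {y | IsNoncrossing y ∧ x ≤ y}

/-- The join of two noncrossing partitions in `NC_n`. -/
def joinNC {n : ℕ} (x y : Setoid (Fin n)) : Setoid (Fin n) :=
  ncClosure (x ⊔ y)

/-- The join of a set of noncrossing partitions in `NC_n`. -/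
def joinSetNC {n : ℕ} (X : Set (Setoid (Fin n))) : Setoid (Fin n) :=
  ncClosure (sSup X)

/-- Membership in `PE_n`: noncrossing, `{n-1, n}` is not a block, and it is not the case
that `{n}` is a singleton block while `1 ∼ n-1`. -/
def PEmem {n : ℕ} (x : Setoid (Fin n)) : Prop :=
  IsNoncrossing x ∧
  ¬ IsBlock x {a : Fin n | a.val = n - 2 ∨ a.val = n - 1} ∧
  ¬ (IsBlock x {a : Fin n | a.val = n - 1} ∧
      ∃ a b : Fin n, a.val = 0 ∧ b.val = n - 2 ∧ x.r a b)

/-- `m` is the meet of `x` and `y` in the poset `PE_n`. -/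
def IsMeetPE {n : ℕ} (x y m : Setoid (Fin n)) : Prop :=
  PEmem m ∧ m ≤ x ∧ m ≤ y ∧ ∀ z, PEmem z → z ≤ x → z ≤ y → z ≤ m

/-- `j` is the join of `x` and `y` in the poset `PE_n`. -/
def IsJoinPE {n : ℕ} (x y j : Setoid (Fin n)) : Prop :=
  PEmem j ∧ x ≤ j ∧ y ≤ j ∧ ∀ z, PEmem z → x ≤ z → y ≤ z → j ≤ z

/-- `x ⋖ y` in `PE_n`. -/
def CovPE {n : ℕ} (x y : Setoid (Fin n)) : Prop :=
  PEmem x ∧ PEmem y ∧ x < y ∧ ∀ z, PEmem z → x < z → ¬ z < y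

/-- The atoms of `NC_n`: partitions `a_{i,j}` with unique non-singleton block `{i, j}`. -/
def IsAtomNC {n : ℕ} (a : Setoid (Fin n)) : Prop :=
  ∃ i j : Fin n, i < j ∧ a = blockSetoid {i, j}

/-- The partial order `≼` on atoms of `NC_n` induced by the classes
`A_j = {a : a ≤ x_j and a ≰ x_{j-1}}`. -/
def atomPrec {n : ℕ} (a b : Setoid (Fin n)) : Prop :=
  ∃ i j : ℕ, 1 ≤ i ∧ i < j ∧ j ≤ n - 1 ∧
    (a ≤ xChain n i ∧ ¬ a ≤ xChain n (i - 1)) ∧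
    (b ≤ xChain n j ∧ ¬ b ≤ xChain n (j - 1))

/-- A set of atoms of `NC_n` is bounded below (BB). -/
def IsBBset {n : ℕ} (X : Set (Setoid (Fin n))) : Prop :=
  ∀ d ∈ X, ∃ a, IsAtomNC a ∧ atomPrec a d ∧ a < joinSetNC X

/-- A set of atoms of `NC_n` is NBB: no nonempty subset is bounded below. -/
def IsNBBset {n : ℕ} (X : Set (Setoid (Fin n))) : Prop :=
  ∀ Y ⊆ X, Y.Nonempty → ¬ IsBBset Y

/-- `X` is an NBB base for the top element of `NC_n`. -/
def IsNBBBaseTop {n : ℕ} (X : Set (Setoid (Fin n))) : Prop :=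
  (∀ a ∈ X, IsAtomNC a) ∧ IsNBBset X ∧ joinSetNC X = ⊤

/-- The graph `τ(X)` on vertex set `[n]` associated with a set `X` of atoms:
`i` and `j` are adjacent iff `a_{i,j} ∈ X`. -/
def atomGraph {n : ℕ} (X : Set (Setoid (Fin n))) : SimpleGraph (Fin n) where
  Adj i j := i ≠ j ∧ blockSetoid ({i, j} : Set (Fin n)) ∈ X
  symm := ⟨by
    rintro i j ⟨hne, hm⟩
    exact ⟨hne.symm, by rwa [Set.pair_comm]⟩⟩
  loopless := ⟨fun i h => h.1 rfl⟩

/-- The parking label of the cover `x ⋖ y` is `p`: `y` merges blocks `B₁, B₂` of `x` with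
`min B₁ < min B₂`, and `p = max { j ∈ B₁ : j ≤ i for all i ∈ B₂ }`. -/
def ParkingLabelIs {n : ℕ} (x y : Setoid (Fin n)) (p : Fin n) : Prop :=
  ∃ B₁ B₂ : Set (Fin n), IsBlock x B₁ ∧ IsBlock x B₂ ∧ B₁ ≠ B₂ ∧
    IsBlock y (B₁ ∪ B₂) ∧
    (∃ a ∈ B₁, ∀ b ∈ B₂, a < b) ∧
    p ∈ B₁ ∧ (∀ i ∈ B₂, p ≤ i) ∧ (∀ j ∈ B₁, (∀ i ∈ B₂, j ≤ i) → j ≤ p)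

/-- The label of the cover `w ⋖ z` in the `S_n` EL-labeling of `PE_n` coming from the
left-modular chain: `λ(w,z) = min { i-1 : x_i ≰ w and x_i ≤ z }`. -/
def LabelIs (n : ℕ) (w z : Setoid (Fin n)) (v : ℕ) : Prop :=
  ∃ i : ℕ, 1 ≤ i ∧ i ≤ n ∧ i - 1 = v ∧ (¬ xChain n i ≤ w ∧ xChain n i ≤ z) ∧
    ∀ j : ℕ, 1 ≤ j → j ≤ n → (¬ xChain n j ≤ w ∧ xChain n j ≤ z) → i ≤ j

/-- The sequence of edge labels along a (saturated) chain, recorded as a list. -/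
def chainLabels {α Λ : Type*} (lab : α → α → Λ) (c : List α) : List Λ :=
  List.zipWith lab c c.tail

/-- `c` is a saturated chain from `a` to `b` with respect to the cover relation `cov`. -/
def IsSatChainList {α : Type*} (cov : α → α → Prop) (a b : α) (c : List α) : Prop :=
  c.head? = some a ∧ c.getLast? = some b ∧ c.Chain' cov

/-- A chain is rising if its label sequence is strictly increasing. -/
def RisingChain {α Λ : Type*} [LT Λ] (lab : α → α → Λ) (c : List α) : Prop :=
  (chainLabels lab c).Chain' (· < ·)

/-- `lab` is an EL-labeling with respect to the cover relation `cov` and order `le`: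
every interval has a unique rising maximal chain, which is lexicographically least. -/
def IsELLabeling {α Λ : Type*} [PartialOrder Λ] (cov : α → α → Prop) (le : α → α → Prop)
    (lab : α → α → Λ) : Prop :=
  ∀ a b, le a b → ∃ c : List α, IsSatChainList cov a b c ∧ RisingChain lab c ∧
    (∀ c', IsSatChainList cov a b c' → RisingChain lab c' → c' = c) ∧
    (∀ c', IsSatChainList cov a b c' → c' ≠ c →
      List.Lex (· < ·) (chainLabels lab c) (chainLabels lab c'))

/-!
If `{n-1, n}` were a block of the join `J` of `x, x' ∈ PE_n`, then the block of `n` in `x` would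
lie inside `{n-1, n}` and, since `{n-1, n}` is not a block of `x`, would be `{n}`; likewise for
`x'`. But the partition with blocks `{n}` and `[n-1]` is noncrossing and lies above `x` and `x'`,
hence above `J`, in which `n` would then be a singleton.
-/

section

variable {n : ℕ}

theorem le_ncClosure (x : Setoid (Fin n)) : x ≤ ncClosure x :=
  le_sInf fun _ hy => hy.2

theorem ncClosure_le {x y : Setoid (Fin n)} (hy : IsNoncrossing y) (hxy : x ≤ y) :
    ncClosure x ≤ y :=
  sInf_le ⟨hy, hxy⟩

theorem le_joinNC_left (x y : Setoid (Fin n)) : x ≤ joinNC x y :=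
  le_sup_left.trans (le_ncClosure _)

theorem le_joinNC_right (x y : Setoid (Fin n)) : y ≤ joinNC x y :=
  le_sup_right.trans (le_ncClosure _)

theorem IsBlock.rel {x : Setoid (Fin n)} {B : Set (Fin n)} (hB : IsBlock x B) {a b : Fin n}
    (ha : a ∈ B) (hb : b ∈ B) : x.r a b := by
  obtain ⟨c, rfl⟩ := hB
  exact x.trans' (x.symm' ha) hb

theorem IsBlock.mem_of_rel {x : Setoid (Fin n)} {B : Set (Fin n)} (hB : IsBlock x B)
    {a b : Fin n} (ha : a ∈ B) (hab : x.r a b) : b ∈ B := by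
  obtain ⟨c, rfl⟩ := hB
  exact x.trans' ha hab

theorem isNoncrossing_blockSetoid (S : Set (Fin n)) : IsNoncrossing (blockSetoid S) := by
  rintro i j k l hij hjk hkl (rfl | ⟨hi, -⟩) (rfl | ⟨hj, -⟩)
  · exact absurd (hij.trans hjk) (lt_irrefl _)
  · exact absurd (hij.trans hjk) (lt_irrefl _)
  · exact absurd (hjk.trans hkl) (lt_irrefl _)
  · exact Or.inr ⟨hi, hj⟩

theorem isBlock_pair_or_eq_of_rel_of_le {x z : Setoid (Fin n)} (hle : x ≤ z) {p q : Fin n}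
    (hz : IsBlock z {p, q}) : IsBlock x {p, q} ∨ ∀ b, x.r q b → b = q := by
  refine or_iff_not_imp_right.mpr fun h => ?_
  obtain ⟨b, hqb, hbq⟩ := not_forall₂.mp h
  have hbp : b = p := (hz.mem_of_rel (by simp) (hle hqb)).resolve_right hbq
  refine ⟨q, Set.ext fun c => ⟨?_, fun hqc => hz.mem_of_rel (by simp) (hle hqc)⟩⟩
  rintro (rfl | rfl)
  · exact hbp ▸ hqb
  · exact x.refl' c

theorem le_blockSetoid_compl_singleton {w : Setoid (Fin n)} {q : Fin n}
    (hq : ∀ b, w.r q b → b = q) : w ≤ blockSetoid {q}ᶜ := by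
  intro c d hcd
  by_cases hc : c = q
  · subst hc
    exact Or.inl (hq d hcd).symm
  by_cases hd : d = q
  · subst hd
    exact absurd (hq c (w.symm' hcd)) hc
  exact Or.inr ⟨hc, hd⟩

theorem eq_of_joinNC_rel {x y : Setoid (Fin n)} {q : Fin n} (hx : ∀ b, x.r q b → b = q)
    (hy : ∀ b, y.r q b → b = q) : ∀ b, (joinNC x y).r q b → b = q := by
  have hle : joinNC x y ≤ blockSetoid {q}ᶜ :=
    ncClosure_le (isNoncrossing_blockSetoid _)
      (sup_le (le_blockSetoid_compl_singleton hx) (le_blockSetoid_compl_singleton hy))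
  intro b hb
  rcases hle hb with h | ⟨hq, -⟩
  · exact h.symm
  · exact absurd rfl hq

end

/-- For `x, x' ∈ PE_n`, the join computed in the noncrossing partition
lattice `NC_n` never has `{n-1, n}` as a block. -/
theorem PE_join_no_bad_block (n : ℕ) (hn : 3 ≤ n) (x x' : Setoid (Fin n))
    (hx : PEmem x) (hx' : PEmem x') :
    ¬ IsBlock (joinNC x x') {a : Fin n | a.val = n - 2 ∨ a.val = n - 1} := by
  set p : Fin n := ⟨n - 2, by omega⟩
  set q : Fin n := ⟨n - 1, by omega⟩
  have hpq : p ≠ q := Fin.ne_of_val_ne (show n - 2 ≠ n - 1 by omega)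
  have hB : {a : Fin n | a.val = n - 2 ∨ a.val = n - 1} = {p, q} := by
    ext a; simp [p, q, Fin.ext_iff]
  rw [hB]
  intro hJ
  have hqx := (isBlock_pair_or_eq_of_rel_of_le (le_joinNC_left x x') hJ).resolve_left
    (hB ▸ hx.2.1)
  have hqx' := (isBlock_pair_or_eq_of_rel_of_le (le_joinNC_right x x') hJ).resolve_left
    (hB ▸ hx'.2.1)
  exact hpq (eq_of_joinNC_rel hqx hqx' p (hJ.rel (by simp) (by simp)))
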